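/- Let 0 ≤ a ≤ 1 parametrize the limit decomposition ν = a ν' + (1-a) ν'' with ν' supported on {∞} × U and ν'' ∈ G, and suppose k : ℝ^d × U → ℝ is continuous, bounded below, and satisfies the near-monotonicity condition liminf_{‖x‖→∞} min_u k(x,u) > β where β = inf_{μ ∈ G} ∫ k dμ. Extend k to (ℝ^d ∪ {∞}) × U by setting k(∞, u) = liminf_{‖x‖→∞} min_{u'} k(x,u'). Then ∫ k dν = a·k(∞,·)-mass + (1-a)∫ k dν'' ≥ β, with equality only if a = 0 and ∫ k dν'' = β. -/

import Mathlib

open MeasureTheory Filter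

section ConvexCombination

variable {β x y a : ℝ}

theorem le_mul_add_one_sub_mul (hx : β ≤ x) (hy : β ≤ y) (ha0 : 0 ≤ a) (ha1 : a ≤ 1) :
    β ≤ a * x + (1 - a) * y := by
  nlinarith

/-- Both summands of `a * (x - β) + (1 - a) * (y - β) = 0` are nonnegative, and the first
vanishes only for `a = 0` since `β < x`. -/
theorem eq_zero_and_eq_of_mul_add_one_sub_mul_eq (hx : β < x) (hy : β ≤ y) (ha0 : 0 ≤ a)
    (ha1 : a ≤ 1) (heq : a * x + (1 - a) * y = β) : a = 0 ∧ y = β := by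
  have ha : a = 0 := by nlinarith
  subst ha
  constructor <;> linarith

end ConvexCombination

theorem near_monotonicity_prevents_escape_of_mass_general
    {d : ℕ} {U : Type*}
    [MeasurableSpace U]
    (G : Set (Measure ((Fin d → ℝ) × U)))
    (k : (Fin d → ℝ) × U → ℝ)
    (β : ℝ) (hβ : IsGLB ((fun μ : Measure ((Fin d → ℝ) × U) => ∫ p, k p ∂μ) '' G) β)
    (κ : ℝ)
    (hnm : β < κ)
    (a : ℝ) (ha0 : 0 ≤ a) (ha1 : a ≤ 1)
    (ν'' : Measure ((Fin d → ℝ) × U)) (hν'' : ν'' ∈ G) :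
    β ≤ a * κ + (1 - a) * ∫ p, k p ∂ν'' ∧
      (a * κ + (1 - a) * ∫ p, k p ∂ν'' = β → a = 0 ∧ ∫ p, k p ∂ν'' = β) := by
  have hν''_cost : β ≤ ∫ p, k p ∂ν'' := hβ.1 (Set.mem_image_of_mem _ hν'')
  exact ⟨le_mul_add_one_sub_mul hnm.le hν''_cost ha0 ha1,
    eq_zero_and_eq_of_mul_add_one_sub_mul_eq hnm hν''_cost ha0 ha1⟩

/-- Under the near-monotonicity condition `liminf_{‖x‖→∞} min_u k(x,u) > β`, where
`β` is the optimal ergodic cost (the infimum of `∫ k dμ` over the set `G` of ergodic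
occupation measures), any limit decomposition `ν = a ν' + (1-a) ν''` with mass `a` at
infinity (whose cost at infinity is the liminf value `κ∞`) and `ν'' ∈ G` has average cost
`a·κ∞ + (1-a)·∫ k dν'' ≥ β`, with equality only if `a = 0` and `∫ k dν'' = β`. -/
theorem near_monotonicity_prevents_escape_of_mass
    {d : ℕ} {U : Type*} [MetricSpace U] [CompactSpace U] [Nonempty U]
    [MeasurableSpace U] [BorelSpace U]
    (G : Set (Measure ((Fin d → ℝ) × U)))
    (hG : ∀ μ ∈ G, IsProbabilityMeasure μ)
    (k : (Fin d → ℝ) × U → ℝ)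
    (hkc : Continuous k) (B : ℝ) (hbd : ∀ p, B ≤ k p)
    (hint : ∀ μ ∈ G, Integrable k μ)
    (β : ℝ) (hβ : IsGLB ((fun μ : Measure ((Fin d → ℝ) × U) => ∫ p, k p ∂μ) '' G) β)
    (κ : ℝ)
    (hκ : κ = liminf (fun x : (Fin d → ℝ) => ⨅ u : U, k (x, u))
        (comap (fun x : (Fin d → ℝ) => ‖x‖) atTop))
    (hnm : β < κ)
    (a : ℝ) (ha0 : 0 ≤ a) (ha1 : a ≤ 1)
    (ν'' : Measure ((Fin d → ℝ) × U)) (hν'' : ν'' ∈ G) :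
    β ≤ a * κ + (1 - a) * ∫ p, k p ∂ν'' ∧
      (a * κ + (1 - a) * ∫ p, k p ∂ν'' = β → a = 0 ∧ ∫ p, k p ∂ν'' = β) :=
  near_monotonicity_prevents_escape_of_mass_general G k β hβ κ hnm a ha0 ha1 ν'' hν''
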